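/- For every integer n ≥ 2 and every real x with √(n−1) ≤ x ≤ n, the identity Ā(n,n) − Ā(n,x) = B̄₁₁ᶜ(n,x) − 2·Σ_{x ≤ j < n} ( C̄(j,j) − C̄(j,x) ) holds, where Ā(n,x) := Σ_{2 ≤ b ≤ x} (2/(b−1))·S_b(n)·log b, B̄₁₁ᶜ(n,x) := n(n−1)·Σ_{x < b ≤ n} (log b)/(b−1), and C̄(m,y) := Σ_{1 ≤ b ≤ y} ⌊m/b⌋·log b. -/

import Mathlib

/-! For a base `b > √(n - 1)` every `j < n` has at most two base-`b` digits, so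
`d_b(j) = j - (b - 1) ⌊j / b⌋` and `S_b(n) = n(n - 1)/2 - (b - 1) Σ_{j<n} ⌊j / b⌋`.
Summing `(2 / (b - 1)) S_b(n) log b` over `x < b ≤ n` therefore gives `B̄₁₁ᶜ(n, x)` minus
`2 Σ_b Σ_{j<n} ⌊j / b⌋ log b`; exchanging the two sums and dropping the vanishing terms
with `j < b` turns the double sum into `Σ_{x ≤ j < n} (C̄(j, j) - C̄(j, x))`. -/

open Real

/-- Sum of base-`b` digits of `n`. -/
def digSum (b n : ℕ) : ℕ := (Nat.digits b n).sum

/-- Running digit sum `S_b(n) = Σ_{j=1}^{n-1} d_b(j)`. -/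
def runSum (b n : ℕ) : ℕ := ∑ j ∈ Finset.range n, digSum b j

/-- `Ā(n,x) = Σ_{2 ≤ b ≤ x} (2/(b−1)) S_b(n) log b`. -/
noncomputable def Abar (n : ℕ) (x : ℝ) : ℝ :=
  ∑ b ∈ Finset.Icc 2 ⌊x⌋₊, 2 / ((b : ℝ) - 1) * (runSum b n : ℝ) * Real.log b

/-- `C̄(m,y) = Σ_{1 ≤ b ≤ y} ⌊m/b⌋ log b`. -/
noncomputable def Cbar (m : ℕ) (y : ℝ) : ℝ :=
  ∑ b ∈ Finset.Icc 1 ⌊y⌋₊, ((m / b : ℕ) : ℝ) * Real.log b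

open Finset

lemma sum_range_natCast_mul_two {R : Type*} [CommRing R] (n : ℕ) :
    (∑ j ∈ range n, (j : R)) * 2 = n * (n - 1) := by
  induction n with
  | zero => simp
  | succ k ih => rw [sum_range_succ, add_mul, ih]; push_cast; ring

lemma sum_Icc_sub_sum_Icc {M : Type*} [AddCommGroup M] (f : ℕ → M) {a m n : ℕ}
    (ha : a ≤ m + 1) (hmn : m ≤ n) :
    ∑ b ∈ Icc a n, f b - ∑ b ∈ Icc a m, f b = ∑ b ∈ Ioc m n, f b := by
  rw [← sum_sdiff_eq_sub (Icc_subset_Icc_right hmn)]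
  congr 1
  ext b
  simp only [mem_sdiff, mem_Icc, mem_Ioc]
  omega

lemma digSum_of_lt {b m : ℕ} (h : m < b) : digSum b m = m := by
  rcases Nat.eq_zero_or_pos m with rfl | hm
  · simp [digSum]
  · simp [digSum, Nat.digits_of_lt b m hm.ne' h]

lemma digSum_eq_mod_add_div {b j : ℕ} (hj : j < b ^ 2) : digSum b j = j % b + j / b := by
  rcases Nat.eq_zero_or_pos j with rfl | hj0
  · simp [digSum]
  have hb : 1 < b := by nlinarith
  have hq : j / b < b := Nat.div_lt_of_lt_mul (by rwa [← sq])
  simpa [digSum, Nat.digits_def' hb hj0] using digSum_of_lt hq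

lemma runSum_add_mul_sum_div {b n : ℕ} (hn : n ≤ b ^ 2) :
    (runSum b n : ℝ) + ((b : ℝ) - 1) * ∑ j ∈ range n, ((j / b : ℕ) : ℝ) =
      ∑ j ∈ range n, (j : ℝ) := by
  rw [runSum, Nat.cast_sum, mul_sum, ← sum_add_distrib]
  refine sum_congr rfl fun j hj => ?_
  have hdiv : ((j % b : ℕ) : ℝ) + b * (j / b : ℕ) = j := by exact_mod_cast Nat.mod_add_div j b
  rw [digSum_eq_mod_add_div ((mem_range.mp hj).trans_le hn), Nat.cast_add]
  linear_combination hdiv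

lemma two_div_mul_runSum_mul_log {b n : ℕ} (hb : 1 < b) (hn : n ≤ b ^ 2) :
    2 / ((b : ℝ) - 1) * runSum b n * log b =
      n * ((n : ℝ) - 1) * (log b / ((b : ℝ) - 1))
        - 2 * ∑ j ∈ range n, ((j / b : ℕ) : ℝ) * log b := by
  have hb' : (b : ℝ) - 1 ≠ 0 := sub_ne_zero.mpr (by exact_mod_cast hb.ne')
  rw [← sum_mul, ← sum_range_natCast_mul_two, ← runSum_add_mul_sum_div hn]
  field_simp
  ring

lemma le_sq_of_floor_lt {n b : ℕ} {x : ℝ} (hx : √((n : ℝ) - 1) ≤ x) (hb : ⌊x⌋₊ < b) :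
    n ≤ b ^ 2 := by
  have hxb : x < b := Nat.lt_of_floor_lt hb
  have hsq : (n : ℝ) - 1 < (b : ℝ) ^ 2 :=
    (sqrt_lt' ((sqrt_nonneg _).trans hx |>.trans_lt hxb)).mp (hx.trans_lt hxb)
  have : (n : ℝ) < (b ^ 2 + 1 : ℕ) := by push_cast; linarith
  exact Nat.lt_succ_iff.mp (by exact_mod_cast this)

lemma Abar_natCast_sub_Abar {n : ℕ} {x : ℝ} (hx : 1 ≤ x) (hxn : x ≤ n) :
    Abar n n - Abar n x = ∑ b ∈ Ioc ⌊x⌋₊ n, 2 / ((b : ℝ) - 1) * runSum b n * log b := by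
  have hfloor : 1 ≤ ⌊x⌋₊ := Nat.le_floor (by exact_mod_cast hx)
  rw [Abar, Abar, Nat.floor_natCast]
  exact sum_Icc_sub_sum_Icc _ (by omega) (Nat.floor_le_of_le hxn)

lemma Cbar_self_sub_Cbar {m N : ℕ} {y : ℝ} (hy : ⌊y⌋₊ ≤ m) (hmN : m ≤ N) :
    Cbar m m - Cbar m y = ∑ b ∈ Ioc ⌊y⌋₊ N, ((m / b : ℕ) : ℝ) * log b := by
  rw [Cbar, Cbar, Nat.floor_natCast, sum_Icc_sub_sum_Icc _ (by omega) hy]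
  refine sum_subset (Ioc_subset_Ioc_right hmN) fun b hbN hbm => ?_
  simp only [mem_Ioc, not_and, not_le] at hbN hbm
  simp [Nat.div_eq_of_lt (hbm hbN.1)]

lemma sum_Cbar_self_sub_Cbar (n : ℕ) (x : ℝ) :
    ∑ j ∈ Ico ⌈x⌉₊ n, (Cbar j j - Cbar j x) =
      ∑ b ∈ Ioc ⌊x⌋₊ n, ∑ j ∈ range n, ((j / b : ℕ) : ℝ) * log b := by
  rw [sum_congr rfl fun j hj => Cbar_self_sub_Cbar (N := n)
    ((Nat.floor_le_ceil x).trans (mem_Ico.mp hj).1) (mem_Ico.mp hj).2.le, sum_comm]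
  refine sum_congr rfl fun b hb => sum_subset (fun j hj => mem_range.mpr (mem_Ico.mp hj).2) ?_
  intro j hjn hj
  have hjb : j < b := by
    have := Nat.ceil_le_floor_add_one x
    simp only [mem_range, mem_Ico, mem_Ioc, not_and, not_lt] at hjn hj hb
    omega
  simp [Nat.div_eq_of_lt hjb]

/-- For `n ≥ 2` and `√(n−1) ≤ x ≤ n`,
`Ā(n,n) − Ā(n,x) = B̄₁₁ᶜ(n,x) − 2 Σ_{x ≤ j < n} (C̄(j,j) − C̄(j,x))`. -/
theorem Abar_complement_formula (n : ℕ) (hn : 2 ≤ n) (x : ℝ)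
    (hx1 : Real.sqrt ((n : ℝ) - 1) ≤ x) (hx2 : x ≤ n) :
    Abar n n - Abar n x =
      (n : ℝ) * ((n : ℝ) - 1) * (∑ b ∈ Finset.Ioc ⌊x⌋₊ n, Real.log b / ((b : ℝ) - 1))
        - 2 * ∑ j ∈ Finset.Ico ⌈x⌉₊ n, (Cbar j j - Cbar j x) := by
  have hn' : (2 : ℝ) ≤ n := Nat.ofNat_le_cast.mpr hn
  have hx : 1 ≤ x :=
    calc (1 : ℝ) = √1 := sqrt_one.symm
      _ ≤ √((n : ℝ) - 1) := sqrt_le_sqrt (by linarith)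
      _ ≤ x := hx1
  have hfloor : 1 ≤ ⌊x⌋₊ := Nat.le_floor (by exact_mod_cast hx)
  rw [Abar_natCast_sub_Abar hx hx2, sum_Cbar_self_sub_Cbar, mul_sum, mul_sum,
    ← sum_sub_distrib]
  refine sum_congr rfl fun b hb => ?_
  obtain ⟨hfloor_lt, -⟩ := mem_Ioc.mp hb
  exact two_div_mul_runSum_mul_log (by omega) (le_sq_of_floor_lt hx1 hfloor_lt)
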